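/- Let $\phi^1(t)$ have coefficients $C^w(\phi^1(t)) = \frac{\lambda_w}{n!}(t/2)^n$ for words $w$ of length $2n$ with all letters occurring an even number of times, $0$ otherwise, where $0 < \lambda_w \le 1$ and $\lambda_w = 1$ when $w$ is a concatenation of squares $e_{i_1}^2\cdots e_{i_n}^2$. Set $\phi^M(T) = \phi^1(T/M)^{\otimes M}$. Then for every word $w = e_{i_1}^2\cdots e_{i_n}^2$ that is a concatenation of $n$ squares, $C^w(\phi^M(T)) \le \frac{1}{n!}(T/2)^n$. -/

import Mathlib

/-!
The coefficient of `φ¹(t)` on a square word with letter counts `c` is `(t/2)^n/n!` times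
`multinomial c / multinomial 2c ≤ 1`, and `φ¹` vanishes on words of odd length. Hence in a product
`φ¹(t) ⊗ D` evaluated on a square word only the cuts between two squares contribute, and induction
on `M` together with the binomial theorem for coefficients `a^j/j!` gives
`C^w(φ¹(t)^{⊗M}) ≤ (M t/2)^n/n!`. Take `t = T/M`.
-/

open scoped Classical

/-- The moments of a centered Gaussian of variance `t`:
`E[X^m] = m!/(2^(m/2) (m/2)!) t^(m/2)` for even `m`, and `0` for odd `m`. -/
noncomputable def gaussMoment (t : ℝ) (m : ℕ) : ℝ :=
  if Even m then (Nat.factorial m : ℝ) / (2 ^ (m / 2) * (Nat.factorial (m / 2) : ℝ)) * t ^ (m / 2)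
  else 0

/-- Coefficient of the word `w` in `φ¹(t)`, the expected signature of the piecewise linear
interpolation of Brownian motion over a single interval of length `t`:
`C^w(φ¹(t)) = (1/|w|!) ∏_k E[(B^k_t)^(N_k(w))]`. -/
noncomputable def phiOne (d : ℕ) (t : ℝ) : List (Fin d) → ℝ :=
  fun w => (1 / (Nat.factorial w.length : ℝ)) * ∏ k : Fin d, gaussMoment t (w.count k)

/-- Coefficient function of the product of two elements of the formal tensor series algebra. -/
noncomputable def mulC {d : ℕ} (C D : List (Fin d) → ℝ) : List (Fin d) → ℝ :=
  fun w => ∑ k ∈ Finset.range (w.length + 1), C (w.take k) * D (w.drop k)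

/-- Coefficient function of the `M`-th power in the formal tensor series algebra. -/
noncomputable def powC {d : ℕ} (C : List (Fin d) → ℝ) : ℕ → List (Fin d) → ℝ
  | 0 => fun w => if w = [] then 1 else 0
  | k + 1 => mulC C (powC C k)

open Finset Nat

theorem Finset.sum_range_two_mul_add_one {M : Type*} [AddCommMonoid M] (f : ℕ → M) (n : ℕ) :
    ∑ k ∈ range (2 * n + 1), f k =
      ∑ j ∈ range (n + 1), f (2 * j) + ∑ j ∈ range n, f (2 * j + 1) := by
  induction n with
  | zero => simp
  | succ n ih =>
    rw [show 2 * (n + 1) + 1 = 2 * n + 1 + 1 + 1 by ring, sum_range_succ, sum_range_succ, ih,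
      sum_range_succ (fun j => f (2 * j)) (n + 1), sum_range_succ (fun j => f (2 * j + 1)) n,
      show 2 * (n + 1) = 2 * n + 1 + 1 by ring]
    abel

theorem Nat.choose_le_choose_two_mul (m k : ℕ) : m.choose k ≤ (2 * m).choose (2 * k) := by
  rw [two_mul, two_mul, add_choose_eq]
  calc m.choose k ≤ m.choose k * m.choose k := Nat.le_mul_self _
    _ ≤ _ := single_le_sum (f := fun ij => m.choose ij.1 * m.choose ij.2)
        (fun _ _ => Nat.zero_le _) (mem_antidiagonal.mpr rfl : (k, k) ∈ antidiagonal (k + k))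

theorem Nat.multinomial_le_multinomial_two_mul {ι : Type*} (s : Finset ι) (c : ι → ℕ) :
    multinomial s c ≤ multinomial s (fun i => 2 * c i) := by
  classical
  induction s using Finset.induction_on with
  | empty => simp
  | insert a s ha ih =>
    rw [multinomial_insert ha, multinomial_insert ha, ← mul_sum, ← mul_add]
    exact Nat.mul_le_mul (choose_le_choose_two_mul _ _) ih

theorem add_pow_div_factorial {K : Type*} [Field K] [CharZero K] (x y : K) (n : ℕ) :
    (x + y) ^ n / n ! = ∑ j ∈ range (n + 1), x ^ j / j ! * (y ^ (n - j) / (n - j)!) := by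
  rw [add_pow, sum_div]
  refine sum_congr rfl fun j hj => ?_
  have : (n ! : K) ≠ 0 := by exact_mod_cast n.factorial_ne_zero
  rw [cast_choose K (Nat.lt_succ_iff.mp (mem_range.mp hj))]
  field_simp

section SquareWord

variable {α : Type*}

def squareWord (l : List α) : List α := l.flatMap fun a => [a, a]

@[simp] theorem squareWord_nil : squareWord ([] : List α) = [] := rfl

@[simp] theorem squareWord_cons (a : α) (l : List α) :
    squareWord (a :: l) = a :: a :: squareWord l := rfl

@[simp] theorem length_squareWord (l : List α) : (squareWord l).length = 2 * l.length := by
  induction l with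
  | nil => rfl
  | cons a l ih => simp [ih]; ring

theorem count_squareWord [BEq α] [LawfulBEq α] (l : List α) (a : α) :
    (squareWord l).count a = 2 * l.count a := by
  induction l with
  | nil => rfl
  | cons b l ih => simp only [squareWord_cons, List.count_cons, ih]; split <;> ring

theorem take_squareWord (l : List α) (j : ℕ) :
    (squareWord l).take (2 * j) = squareWord (l.take j) := by
  induction l generalizing j with
  | nil => simp
  | cons a l ih => cases j <;> simp [mul_add, ih]

theorem drop_squareWord (l : List α) (j : ℕ) :
    (squareWord l).drop (2 * j) = squareWord (l.drop j) := by
  induction l generalizing j with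
  | nil => simp
  | cons a l ih => cases j <;> simp [mul_add, ih]

end SquareWord

theorem gaussMoment_nonneg {t : ℝ} (ht : 0 ≤ t) (m : ℕ) : 0 ≤ gaussMoment t m := by
  unfold gaussMoment
  split_ifs <;> positivity

theorem gaussMoment_two_mul (t : ℝ) (c : ℕ) :
    gaussMoment t (2 * c) = (2 * c)! * ((t / 2) ^ c / c !) := by
  rw [gaussMoment, if_pos (even_two_mul c), Nat.mul_div_cancel_left c two_pos, div_pow]
  ring

theorem sum_count_eq_length {α : Type*} [Fintype α] [DecidableEq α] (w : List α) :
    ∑ a, w.count a = w.length := by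
  simpa using Multiset.sum_count_eq_card (s := univ) (m := (w : Multiset α)) (by simp)

theorem phiOne_nonneg {d : ℕ} {t : ℝ} (ht : 0 ≤ t) (w : List (Fin d)) : 0 ≤ phiOne d t w :=
  mul_nonneg (by positivity) (prod_nonneg fun k _ => gaussMoment_nonneg ht _)

theorem phiOne_eq_zero_of_odd_length {d : ℕ} (t : ℝ) {w : List (Fin d)} (hw : Odd w.length) :
    phiOne d t w = 0 := by
  obtain ⟨k, hk⟩ : ∃ k : Fin d, ¬ Even (w.count k) := by
    by_contra! h
    exact Nat.not_even_iff_odd.mpr hw (sum_count_eq_length w ▸ even_sum _ fun k _ => h k)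
  rw [phiOne, prod_eq_zero (mem_univ k) (by rw [gaussMoment, if_neg hk]), mul_zero]

/-- The factor `multinomial c / multinomial 2c` is the weight `λ_w` of the square word `w`. -/
theorem phiOne_squareWord {d : ℕ} (t : ℝ) (l : List (Fin d)) :
    phiOne d t (squareWord l) = (t / 2) ^ l.length / l.length ! *
      (multinomial univ (fun k => l.count k) / multinomial univ (fun k => 2 * l.count k)) := by
  have hc := multinomial_spec univ (fun k => l.count k)
  have h2c := multinomial_spec univ (fun k => 2 * l.count k)
  rw [← mul_sum, sum_count_eq_length] at h2c
  rw [sum_count_eq_length] at hc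
  simp only [phiOne, length_squareWord, count_squareWord, gaussMoment_two_mul, prod_mul_distrib,
    prod_div_distrib, prod_pow_eq_pow_sum, sum_count_eq_length, ← h2c, ← hc]
  have : ∀ k : Fin d, ((l.count k)! : ℝ) ≠ 0 := fun k => by positivity
  have : (multinomial univ (fun k => 2 * l.count k) : ℝ) ≠ 0 := by
    exact_mod_cast (multinomial_pos _ _).ne'
  have : (multinomial univ (fun k => l.count k) : ℝ) ≠ 0 := by
    exact_mod_cast (multinomial_pos _ _).ne'
  push_cast
  field_simp

theorem phiOne_squareWord_le {d : ℕ} {t : ℝ} (ht : 0 ≤ t) (l : List (Fin d)) :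
    phiOne d t (squareWord l) ≤ (t / 2) ^ l.length / l.length ! := by
  rw [phiOne_squareWord]
  refine mul_le_of_le_one_right (by positivity) (div_le_one_of_le₀ ?_ (by positivity))
  exact_mod_cast multinomial_le_multinomial_two_mul _ _

section Products

variable {d : ℕ}

theorem powC_nonneg {C : List (Fin d) → ℝ} (hC : ∀ w, 0 ≤ C w) (m : ℕ) (w : List (Fin d)) :
    0 ≤ powC C m w := by
  induction m generalizing w with
  | zero => simp only [powC]; split_ifs <;> norm_num
  | succ m ih =>
    rw [powC, mulC]
    exact sum_nonneg fun k _ => mul_nonneg (hC _) (ih _)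

theorem mulC_squareWord {C : List (Fin d) → ℝ} (hC : ∀ w, Odd w.length → C w = 0)
    (D : List (Fin d) → ℝ) (l : List (Fin d)) :
    mulC C D (squareWord l) = ∑ j ∈ range (l.length + 1),
      C (squareWord (l.take j)) * D (squareWord (l.drop j)) := by
  have hodd : ∀ j ∈ range l.length, C ((squareWord l).take (2 * j + 1)) = 0 := fun j hj =>
    hC _ ⟨j, by rw [List.length_take, length_squareWord]; have := mem_range.mp hj; omega⟩
  simp only [mulC, length_squareWord, sum_range_two_mul_add_one, take_squareWord, drop_squareWord]
  rw [add_eq_left]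
  exact sum_eq_zero fun j hj => by rw [hodd j hj, zero_mul]

theorem powC_squareWord_le {C : List (Fin d) → ℝ} (hC0 : ∀ w, 0 ≤ C w)
    (hCodd : ∀ w, Odd w.length → C w = 0) {a : ℝ}
    (hC : ∀ l, C (squareWord l) ≤ a ^ l.length / l.length !) (m : ℕ) (l : List (Fin d)) :
    powC C m (squareWord l) ≤ (m * a) ^ l.length / l.length ! := by
  induction m generalizing l with
  | zero =>
    cases l <;> simp [powC]
  | succ m ih =>
    have hterm : ∀ j ≤ l.length, C (squareWord (l.take j)) * powC C m (squareWord (l.drop j)) ≤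
        a ^ j / j ! * ((m * a) ^ (l.length - j) / (l.length - j)!) := fun j hj => by
      have h1 := hC (l.take j)
      have h2 := ih (l.drop j)
      rw [List.length_take_of_le hj] at h1
      rw [List.length_drop] at h2
      exact mul_le_mul h1 h2 (powC_nonneg hC0 _ _) ((hC0 _).trans h1)
    calc powC C (m + 1) (squareWord l)
        = ∑ j ∈ range (l.length + 1), C (squareWord (l.take j)) * powC C m (squareWord (l.drop j)) :=
          mulC_squareWord hCodd _ l
      _ ≤ ∑ j ∈ range (l.length + 1), a ^ j / j ! * ((m * a) ^ (l.length - j) / (l.length - j)!) :=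
          sum_le_sum fun j hj => hterm j (Nat.lt_succ_iff.mp (mem_range.mp hj))
      _ = ((m + 1 : ℕ) * a) ^ l.length / l.length ! := by
          rw [← add_pow_div_factorial]; push_cast; ring

end Products

/-- For every word `w = e_{i₁}² ⋯ e_{i_n}²` that is a concatenation of `n` squares,
the coefficient of `w` in `φ^M(T) = φ¹(T/M)^{⊗M}` is at most `(1/n!)(T/2)^n`. -/
theorem stmt13 (d n M : ℕ) (hM : 1 ≤ M) (T : ℝ) (hT : 0 ≤ T)
    (l : List (Fin d)) (hl : l.length = n) :
    powC (phiOne d (T / M)) M (l.flatMap (fun j => [j, j])) ≤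
      (T / 2) ^ n / (Nat.factorial n : ℝ) := by
  have hM0 : (M : ℝ) ≠ 0 := by positivity
  have ht : 0 ≤ T / M := by positivity
  have hMT : (M : ℝ) * (T / M / 2) = T / 2 := by field_simp
  have key := powC_squareWord_le (phiOne_nonneg ht) (fun _ => phiOne_eq_zero_of_odd_length _)
    (phiOne_squareWord_le ht) M l
  rwa [hl, hMT] at key
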